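/- arXiv:1009.3418 — 6 statements merged into one kernel-verified Lean document; each statement's English description precedes it below -/
import Mathlib

section
/- Let f and g be entire functions of finite order, and let α₁, α₂ ∈ [0, 2π) be such that α₁ − α₂ is not a rational multiple of π. If |g(x·e^{iα₁})| = |f(x·e^{iα₁})| and |g(x·e^{iα₂})| = |f(x·e^{iα₂})| for all real x, then there exists a constant c ∈ ℂ with |c| = 1 such that g = c·f. -/
/-!
Write the two lines as `ℝ u₁` and `ℝ u₂` with `|uᵢ| = 1`; then `z ↦ uᵢ² z̄` is the reflection in
`ℝ uᵢ`. On that line `g(z) · conj (g (uᵢ² z̄)) = |g z|² = |f z|² = f(z) · conj (f (uᵢ² z̄))`, and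
both sides are entire, so the identity holds on all of `ℂ`. Comparing the identity for `u₁` at
`z` with the one for `u₂` at `ρ z`, where `ρ = (u₂ / u₁)²` is the composite of the two
reflections, gives `g(z) f(ρ z) = f(z) g(ρ z)`: the quotient `g / f` is invariant under the
rotation by `ρ`. As the angle between the lines is an irrational multiple of `π`, `ρ` is not a
root of unity, so the orbit of a point `z₀ ≠ 0` is an infinite subset of a circle and accumulates;
hence `g = (g z₀ / f z₀) f` by the identity theorem.
-/

open Complex ComplexConjugate Filter Topology

/-- An entire function has finite order if `max_{|z|=r} |f z| ≤ exp (r^λ)` for some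
`λ ≥ 0` and all sufficiently large `r`. -/
def FiniteOrder (f : ℂ → ℂ) : Prop :=
  ∃ lam : ℝ, 0 ≤ lam ∧ ∃ R : ℝ, ∀ z : ℂ, R ≤ ‖z‖ →
    ‖f z‖ ≤ Real.exp (‖z‖ ^ lam)

section

variable {E : Type*} [NormedAddCommGroup E] [NormedSpace ℂ E] [CompleteSpace E] {F G : ℂ → E}

theorem Differentiable.eq_of_eq_on_line (hF : Differentiable ℂ F) (hG : Differentiable ℂ G)
    {e : ℂ} (he : e ≠ 0) (h : ∀ x : ℝ, x ≠ 0 → F (x * e) = G (x * e)) : F = G := by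
  have hline : Tendsto (fun x : ℝ => (x : ℂ) * e) (𝓝[≠] 0) (𝓝[≠] 0) := by
    refine tendsto_nhdsWithin_of_tendsto_nhds_of_eventually_within _ ?_ ?_
    · exact (Continuous.tendsto' (by fun_prop) 0 0 (by simp)).mono_left nhdsWithin_le_nhds
    · filter_upwards [self_mem_nhdsWithin] with x hx
      exact mul_ne_zero (ofReal_ne_zero.mpr hx) he
  have hev : ∀ᶠ x : ℝ in 𝓝[≠] 0, F (x * e) = G (x * e) := eventually_mem_nhdsWithin.mono h
  exact (analyticOnNhd_univ_iff_differentiable.mpr hF).eq_of_frequently_eq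
    (analyticOnNhd_univ_iff_differentiable.mpr hG) (hline.frequently hev.frequently)

theorem Differentiable.eq_of_eq_on_orbit (hF : Differentiable ℂ F) (hG : Differentiable ℂ G)
    {ρ : Circle} (hρ : ¬IsOfFinOrder ρ) {z₀ : ℂ} (hz₀ : z₀ ≠ 0)
    (h : ∀ n : ℕ, F ((ρ : ℂ) ^ n * z₀) = G ((ρ : ℂ) ^ n * z₀)) : F = G := by
  have hinj : Function.Injective fun n : ℕ => (ρ : ℂ) ^ n * z₀ := by
    intro n m hnm
    apply (injective_pow_iff_not_isOfFinOrder (G := Circle)).mpr hρ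
    apply Circle.coe_injective
    simpa using mul_right_cancel₀ hz₀ hnm
  have horbit : Set.range (fun n : ℕ => (ρ : ℂ) ^ n * z₀) ⊆ Metric.sphere 0 ‖z₀‖ := by
    rintro _ ⟨n, rfl⟩
    simp [Circle.norm_coe]
  obtain ⟨x, -, hx⟩ := (Set.infinite_range_of_injective hinj).exists_accPt_of_subset_isCompact
    (isCompact_sphere 0 ‖z₀‖) horbit
  refine (analyticOnNhd_univ_iff_differentiable.mpr hF).eq_of_frequently_eq
    (analyticOnNhd_univ_iff_differentiable.mpr hG) (z₀ := x) ?_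
  exact (accPt_iff_frequently_nhdsNE.mp hx).mono (by rintro _ ⟨n, rfl⟩; exact h n)

end

theorem Differentiable.eq_zero_of_mul_eq_zero {F K : ℂ → ℂ} (hF : Differentiable ℂ F)
    (hK : Differentiable ℂ K) (hK0 : K ≠ 0) (hFK : ∀ z, F z * K z = 0) : F = 0 := by
  rcases (analyticOnNhd_univ_iff_differentiable.mpr hF).eq_zero_or_eq_zero_of_mul_eq_zero
    (analyticOnNhd_univ_iff_differentiable.mpr hK) (fun z _ => hFK z) isPreconnected_univ
    with hF0 | hK0'
  · exact funext fun z => hF0 z trivial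
  · exact absurd (funext fun z => hK0' z trivial) hK0

theorem Differentiable.conj_comp_mul_conj {F : ℂ → ℂ} (hF : Differentiable ℂ F) (c : ℂ) :
    Differentiable ℂ fun z => conj (F (c * conj z)) := fun z => by
  simpa [Function.comp_def] using ((hF.comp (differentiable_id.const_mul c)) (conj z)).conj_conj

theorem Circle.not_isOfFinOrder_exp {θ : ℝ} (h : ∀ q : ℚ, θ ≠ q * Real.pi) :
    ¬IsOfFinOrder (Circle.exp θ) := by
  rw [isOfFinOrder_iff_pow_eq_one]
  rintro ⟨n, hn, hpow⟩
  rw [← Circle.exp_natCast_mul, Circle.exp_eq_one] at hpow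
  obtain ⟨m, hm⟩ := hpow
  refine h (2 * m / n) ?_
  have : (n : ℝ) ≠ 0 := by positivity
  push_cast
  field_simp
  linarith

theorem mul_conj_reflect_eq_of_norm_eq_on_line {f g : ℂ → ℂ} (hf : Differentiable ℂ f)
    (hg : Differentiable ℂ g) (u : Circle) (h : ∀ x : ℝ, ‖g (x * (u : ℂ))‖ = ‖f (x * (u : ℂ))‖)
    (z : ℂ) :
    g z * conj (g ((u : ℂ) ^ 2 * conj z)) = f z * conj (f ((u : ℂ) ^ 2 * conj z)) := by
  have hreflect (x : ℝ) : (u : ℂ) ^ 2 * conj ((x : ℂ) * u) = x * u := by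
    rw [map_mul, conj_ofReal, ← Circle.coe_inv_eq_conj, Circle.coe_inv]
    field_simp
  refine congrFun ((hg.mul (hg.conj_comp_mul_conj _)).eq_of_eq_on_line
    (hf.mul (hf.conj_comp_mul_conj _)) u.coe_ne_zero fun x _ => ?_) z
  simp only [Pi.mul_apply, hreflect, mul_conj', h x]

theorem mul_comp_rotation_eq_of_norm_eq_on_two_lines {f g : ℂ → ℂ} (hf : Differentiable ℂ f)
    (hg : Differentiable ℂ g) (u₁ u₂ : Circle)
    (h₁ : ∀ x : ℝ, ‖g (x * (u₁ : ℂ))‖ = ‖f (x * (u₁ : ℂ))‖)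
    (h₂ : ∀ x : ℝ, ‖g (x * (u₂ : ℂ))‖ = ‖f (x * (u₂ : ℂ))‖) (z : ℂ) :
    g z * f (((u₂ / u₁) ^ 2 : Circle) * z) = f z * g (((u₂ / u₁) ^ 2 : Circle) * z) := by
  set ρ : ℂ := (((u₂ / u₁) ^ 2 : Circle) : ℂ)
  rcases eq_or_ne g 0 with rfl | hg0
  · simp
  have hcompose (z : ℂ) : (u₂ : ℂ) ^ 2 * conj (ρ * z) = u₁ ^ 2 * conj z := by
    simp only [ρ, map_mul, Circle.coe_pow, Circle.coe_div, map_pow, map_div₀,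
      ← Circle.coe_inv_eq_conj, Circle.coe_inv]
    field_simp
  have hK0 : (fun z => conj (g ((u₁ : ℂ) ^ 2 * conj z))) ≠ 0 := by
    refine fun hK => hg0 (funext fun w => ?_)
    have hw := congrFun hK (conj (((u₁ : ℂ) ^ 2)⁻¹ * w))
    simpa only [Pi.zero_apply, conj_conj, map_eq_zero,
      mul_inv_cancel_left₀ (pow_ne_zero 2 u₁.coe_ne_zero)] using hw
  have hH : (fun z => g z * f (ρ * z) - f z * g (ρ * z)) = 0 := by
    refine Differentiable.eq_zero_of_mul_eq_zero (by fun_prop) (hg.conj_comp_mul_conj _) hK0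
      fun z => ?_
    have h₁z := mul_conj_reflect_eq_of_norm_eq_on_line hf hg u₁ h₁ z
    have h₂z := mul_conj_reflect_eq_of_norm_eq_on_line hf hg u₂ h₂ (ρ * z)
    rw [hcompose] at h₂z
    linear_combination f (ρ * z) * h₁z - f z * h₂z
  exact sub_eq_zero.mp (congrFun hH z)

theorem mul_comp_pow_eq_of_mul_comp_eq {f g : ℂ → ℂ} (hf : Differentiable ℂ f)
    (hg : Differentiable ℂ g) (hf0 : f ≠ 0) {ρ : ℂ} (hρ : ρ ≠ 0)
    (h : ∀ z, g z * f (ρ * z) = f z * g (ρ * z)) (n : ℕ) (z : ℂ) :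
    g z * f (ρ ^ n * z) = f z * g (ρ ^ n * z) := by
  induction n generalizing z with
  | zero => simp [mul_comm]
  | succ n ih =>
    have hfn0 : (fun z => f (ρ ^ n * z)) ≠ 0 := by
      refine fun hfn => hf0 (funext fun w => ?_)
      simpa [hρ] using congrFun hfn ((ρ ^ n)⁻¹ * w)
    have hH : (fun z => g z * f (ρ ^ (n + 1) * z) - f z * g (ρ ^ (n + 1) * z)) = 0 := by
      refine Differentiable.eq_zero_of_mul_eq_zero (by fun_prop) (by fun_prop) hfn0 fun z => ?_
      have hstep := h (ρ ^ n * z)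
      rw [← mul_assoc, ← pow_succ'] at hstep
      linear_combination f (ρ ^ (n + 1) * z) * ih z + f z * hstep
    exact sub_eq_zero.mp (congrFun hH z)

theorem eq_const_mul_of_mul_comp_eq {f g : ℂ → ℂ} (hf : Differentiable ℂ f)
    (hg : Differentiable ℂ g) {ρ : Circle} (hρ : ¬IsOfFinOrder ρ)
    (h : ∀ z, g z * f (ρ * z) = f z * g (ρ * z)) {z₀ : ℂ} (hz₀ : z₀ ≠ 0) (hfz₀ : f z₀ ≠ 0) :
    g = fun z => g z₀ / f z₀ * f z := by
  refine hg.eq_of_eq_on_orbit (hf.const_mul _) hρ hz₀ fun n => ?_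
  have hn := mul_comp_pow_eq_of_mul_comp_eq hf hg (fun h0 => hfz₀ (by simp [h0]))
    ρ.coe_ne_zero h n z₀
  rw [div_mul_eq_mul_div, eq_div_iff hfz₀]
  linear_combination -hn

theorem entire_determined_by_modulus_on_two_lines_general
    (f g : ℂ → ℂ) (hf : Differentiable ℂ f) (hg : Differentiable ℂ g)
    (α₁ α₂ : ℝ)
    (hirr : ∀ q : ℚ, α₁ - α₂ ≠ (q : ℝ) * Real.pi)
    (heq1 : ∀ x : ℝ, ‖g ((x : ℂ) * Complex.exp (Complex.I * α₁))‖
        = ‖f ((x : ℂ) * Complex.exp (Complex.I * α₁))‖)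
    (heq2 : ∀ x : ℝ, ‖g ((x : ℂ) * Complex.exp (Complex.I * α₂))‖
        = ‖f ((x : ℂ) * Complex.exp (Complex.I * α₂))‖) :
    ∃ c : ℂ, ‖c‖ = 1 ∧ g = fun z => c * f z := by
  have hexp (α : ℝ) : Complex.exp (Complex.I * α) = Circle.exp α := by
    rw [Circle.coe_exp, mul_comm]
  simp only [hexp] at heq1 heq2
  have hρ : ¬IsOfFinOrder ((Circle.exp α₂ / Circle.exp α₁) ^ 2) := by
    rw [← Circle.exp_sub, ← Circle.exp_natCast_mul]
    refine Circle.not_isOfFinOrder_exp fun q hq => hirr (-q / 2) ?_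
    push_cast at hq ⊢
    linarith
  by_cases hf0 : ∀ x : ℝ, x ≠ 0 → f (x * Circle.exp α₁) = 0
  · have f0 : f = 0 := hf.eq_of_eq_on_line (differentiable_const 0) (Circle.coe_ne_zero _) hf0
    have g0 : g = 0 := hg.eq_of_eq_on_line (differentiable_const 0) (Circle.coe_ne_zero _)
      fun x _ => norm_eq_zero.mp ((heq1 x).trans (by simp [f0]))
    exact ⟨1, by simp, by ext; simp [f0, g0]⟩
  push Not at hf0
  obtain ⟨x₀, hx₀, hfx₀⟩ := hf0
  refine ⟨_, ?_, eq_const_mul_of_mul_comp_eq hf hg hρ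
    (mul_comp_rotation_eq_of_norm_eq_on_two_lines hf hg _ _ heq1 heq2)
    (mul_ne_zero (ofReal_ne_zero.mpr hx₀) (Circle.coe_ne_zero _)) hfx₀⟩
  rw [norm_div, heq1 x₀, div_self (norm_ne_zero_iff.mpr hfx₀)]

/-- Theorem 3.2: an entire function of finite order is determined, up to a unimodular
constant, by its modulus on two lines through the origin making an angle which is an
irrational multiple of `π`. -/
theorem entire_determined_by_modulus_on_two_lines
    (f g : ℂ → ℂ) (hf : Differentiable ℂ f) (hg : Differentiable ℂ g)
    (hfo : FiniteOrder f) (hgo : FiniteOrder g)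
    (α₁ α₂ : ℝ) (hα₁ : α₁ ∈ Set.Ico (0:ℝ) (2 * Real.pi))
    (hα₂ : α₂ ∈ Set.Ico (0:ℝ) (2 * Real.pi))
    (hirr : ∀ q : ℚ, α₁ - α₂ ≠ (q : ℝ) * Real.pi)
    (heq1 : ∀ x : ℝ, ‖g ((x : ℂ) * Complex.exp (Complex.I * α₁))‖
        = ‖f ((x : ℂ) * Complex.exp (Complex.I * α₁))‖)
    (heq2 : ∀ x : ℝ, ‖g ((x : ℂ) * Complex.exp (Complex.I * α₂))‖
        = ‖f ((x : ℂ) * Complex.exp (Complex.I * α₂))‖) :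
    ∃ c : ℂ, ‖c‖ = 1 ∧ g = fun z => c * f z :=
  entire_determined_by_modulus_on_two_lines_general f g hf hg α₁ α₂ hirr heq1 heq2
end

section
/- The family of functions {t ↦ e^{ζ t² + z t} : (ζ, z) ∈ ℂ²}, viewed as functions from ℝ to ℂ, is linearly independent over ℂ. -/
/-!
The exponents `ζ t² + z t` have pairwise distinct derivatives, and that is all the argument
needs: sums `∑ Pᵢ e^{qᵢ}` with polynomial coefficients and such exponents vanish only trivially.
Since `d/dt (P e^q) = (P' + q' P) e^q`, applying `d/dt - n'` to a vanishing sum `∑ Pᵢ e^{qᵢ}`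
gives another one, with `Pᵢ` replaced by `Pᵢ' + (qᵢ - n)' Pᵢ`. This lowers the degree of the
coefficient with `qᵢ = n` and keeps every other nonzero coefficient nonzero (its degree does not
drop), so enough applications remove one term and induction on the number of terms applies.
-/

open Polynomial

namespace Polynomial

variable {R : Type*} [CommRing R]

noncomputable def twistedDerivative (a P : R[X]) : R[X] := derivative P + a * P

@[simp]
lemma twistedDerivative_zero : twistedDerivative (0 : R[X]) = derivative := by
  funext P
  simp [twistedDerivative]

lemma twistedDerivative_ne_zero [IsDomain R] {a P : R[X]} (ha : a ≠ 0) (hP : P ≠ 0) :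
    twistedDerivative a P ≠ 0 := by
  have hlt : (derivative P).degree < (a * P).degree := by
    rw [degree_mul]
    calc (derivative P).degree < P.degree := degree_derivative_lt hP
      _ ≤ a.degree + P.degree := le_add_of_nonneg_left (zero_le_degree_iff.2 ha)
  rw [twistedDerivative, ← degree_ne_bot, degree_add_eq_right_of_degree_lt hlt, degree_ne_bot]
  exact mul_ne_zero ha hP

lemma iterate_twistedDerivative_ne_zero [IsDomain R] {a P : R[X]} (ha : a ≠ 0) (hP : P ≠ 0)
    (k : ℕ) :
    (twistedDerivative a)^[k] P ≠ 0 := by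
  induction k with
  | zero => exact hP
  | succ k ih =>
    rw [Function.iterate_succ_apply']
    exact twistedDerivative_ne_zero ha ih

end Polynomial

noncomputable def polyMulExp (P q : ℂ[X]) (t : ℝ) : ℂ :=
  P.eval (t : ℂ) * Complex.exp (q.eval (t : ℂ))

lemma hasDerivAt_polyMulExp (P q : ℂ[X]) (t : ℝ) :
    HasDerivAt (polyMulExp P q) (polyMulExp (twistedDerivative (derivative q) P) q t) t := by
  have hP := (P.hasDerivAt (t : ℂ)).comp_ofReal
  have hq := (q.hasDerivAt (t : ℂ)).comp_ofReal.cexp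
  refine (hP.mul hq).congr_deriv ?_
  simp only [polyMulExp, twistedDerivative, eval_add, eval_mul]
  ring

lemma polyMulExp_eq_zero_iff {P : ℂ[X]} (q : ℂ[X]) : polyMulExp P q = 0 ↔ P = 0 := by
  refine ⟨fun h => ?_, fun h => by funext t; simp [polyMulExp, h]⟩
  refine eq_zero_of_infinite_isRoot P (Set.infinite_of_injective_forall_mem
    Complex.ofReal_injective fun t : ℝ => ?_)
  simpa [polyMulExp, Complex.exp_ne_zero] using congrFun h t

section

variable {ι : Type*} {s : Finset ι} {P q : ι → ℂ[X]}

lemma sum_polyMulExp_twistedDerivative_eq_zero (h : ∑ i ∈ s, polyMulExp (P i) (q i) = 0)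
    (n : ℂ[X]) :
    ∑ i ∈ s, polyMulExp (twistedDerivative (derivative (q i - n)) (P i)) (q i) = 0 := by
  funext t
  rw [Finset.sum_apply]
  have hderiv :
      ∑ i ∈ s, polyMulExp (twistedDerivative (derivative (q i)) (P i)) (q i) t = 0 := by
    refine (HasDerivAt.fun_sum fun i _ => hasDerivAt_polyMulExp (P i) (q i) t).unique ?_
    rw [← Finset.sum_fn, h]
    exact hasDerivAt_const t (0 : ℂ)
  have hval : ∑ i ∈ s, polyMulExp (P i) (q i) t = 0 := by
    rw [← Finset.sum_apply, h, Pi.zero_apply]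
  calc ∑ i ∈ s, polyMulExp (twistedDerivative (derivative (q i - n)) (P i)) (q i) t
      = ∑ i ∈ s, polyMulExp (twistedDerivative (derivative (q i)) (P i)) (q i) t
        - (derivative n).eval (t : ℂ) * ∑ i ∈ s, polyMulExp (P i) (q i) t := by
        rw [Finset.mul_sum, ← Finset.sum_sub_distrib]
        refine Finset.sum_congr rfl fun i _ => ?_
        simp only [polyMulExp, twistedDerivative, derivative_sub, eval_add, eval_mul, eval_sub]
        ring
    _ = 0 := by rw [hderiv, hval, mul_zero, sub_zero]

lemma sum_polyMulExp_iterate_twistedDerivative_eq_zero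
    (h : ∑ i ∈ s, polyMulExp (P i) (q i) = 0) (n : ℂ[X]) (k : ℕ) :
    ∑ i ∈ s, polyMulExp ((twistedDerivative (derivative (q i - n)))^[k] (P i)) (q i) = 0 := by
  induction k with
  | zero => exact h
  | succ k ih =>
    simp only [Function.iterate_succ_apply']
    exact sum_polyMulExp_twistedDerivative_eq_zero ih n

theorem eq_zero_of_sum_polyMulExp_eq_zero (hq : Set.InjOn (fun i => derivative (q i)) s)
    (h : ∑ i ∈ s, polyMulExp (P i) (q i) = 0) : ∀ i ∈ s, P i = 0 := by
  classical
  induction s using Finset.induction_on generalizing P with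
  | empty => simp
  | insert p s hp ih =>
    set d := (P p).natDegree + 1
    have hkill := sum_polyMulExp_iterate_twistedDerivative_eq_zero h (q p) d
    rw [Finset.sum_insert hp, sub_self, derivative_zero, twistedDerivative_zero,
      iterate_derivative_eq_zero (Nat.lt_succ_self _), (polyMulExp_eq_zero_iff _).2 rfl,
      zero_add] at hkill
    have hs : ∀ i ∈ s, P i = 0 := by
      intro i hi
      have hne : derivative (q i - q p) ≠ 0 := by
        have hip : i ≠ p := fun hip => hp (hip ▸ hi)
        rw [derivative_sub, sub_ne_zero]
        exact fun heq => hip (hq (by simp [hi]) (by simp) heq)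
      by_contra hPi
      exact iterate_twistedDerivative_ne_zero hne hPi d
        (ih (hq.mono (by simp)) hkill i hi)
    rw [Finset.sum_insert hp, Finset.sum_eq_zero fun i hi => (polyMulExp_eq_zero_iff _).2 (hs i hi),
      add_zero, polyMulExp_eq_zero_iff] at h
    simpa [h] using hs

theorem linearIndependent_exp_eval {q : ι → ℂ[X]}
    (hq : Function.Injective fun i => derivative (q i)) :
    LinearIndependent ℂ fun i (t : ℝ) => Complex.exp ((q i).eval (t : ℂ)) := by
  rw [linearIndependent_iff']
  intro s g hg i hi
  have h : ∑ j ∈ s, polyMulExp (C (g j)) (q j) = 0 := by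
    simpa [polyMulExp, funext_iff, Finset.sum_apply] using hg
  simpa using eq_zero_of_sum_polyMulExp_eq_zero hq.injOn h i hi

end

/-- The family of functions `t ↦ exp (ζ t² + z t)` (from `ℝ` to `ℂ`), indexed by
pairs `(ζ, z) ∈ ℂ × ℂ`, is linearly independent over `ℂ`. -/
theorem exp_quadratic_linearIndependent :
    LinearIndependent ℂ
      (fun p : ℂ × ℂ => fun t : ℝ => Complex.exp (p.1 * t ^ 2 + p.2 * t)) := by
  have hinj : Function.Injective fun p : ℂ × ℂ => derivative (C p.1 * X ^ 2 + C p.2 * X) := by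
    intro p p' h
    exact Prod.ext (by simpa using congrArg (coeff · 1) h) (by simpa using congrArg (coeff · 0) h)
  simpa using linearIndependent_exp_eval hinj
end

section
/- Let A be the ambiguity function A(u)(x,y) = ∫_ℝ u(t + x/2) · conj(u(t − x/2)) · e^{−2πi t y} dt for u ∈ L²(ℝ). Then for any u, v ∈ L²(ℝ), A(v) = A(u) if and only if there exists c ∈ ℂ with |c| = 1 such that v = c·u. -/
open MeasureTheory

/-- The ambiguity function of `u`:
`A(u)(x,y) = ∫ u(t + x/2) conj (u(t - x/2)) e^{-2iπ t y} dt`. -/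
noncomputable def amb (u : ℝ → ℂ) (x y : ℝ) : ℂ :=
  ∫ t : ℝ, u (t + x / 2) * (starRingEnd ℂ) (u (t - x / 2)) *
    Complex.exp (-2 * (Real.pi : ℂ) * Complex.I * (t : ℂ) * (y : ℂ))

/-- The fractional Fourier transform of order `α`.  For `sin α ≠ 0` it is given by
`F_α u(ξ) = c_α e^{-iπ ξ² cot α} ∫ u(t) e^{-iπ t² cot α} e^{-2iπ t ξ / sin α} dt`
with `c_α = e^{i(α - π/2)/2} / √|sin α|`; for `α ∈ πℤ` it is `u(± ξ) = u(cos α · ξ)`. -/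
noncomputable def frft (α : ℝ) (u : ℝ → ℂ) : ℝ → ℂ :=
  if Real.sin α = 0 then fun ξ => u (Real.cos α * ξ)
  else fun ξ =>
    (Complex.exp (Complex.I * ((α : ℂ) - (Real.pi : ℂ) / 2) / 2) /
        (Real.sqrt |Real.sin α| : ℂ)) *
      Complex.exp (-(Real.pi : ℂ) * Complex.I * (ξ : ℂ) ^ 2 *
        ((Real.cos α / Real.sin α : ℝ) : ℂ)) *
      ∫ t : ℝ, u t *
        Complex.exp (-(Real.pi : ℂ) * Complex.I * (t : ℂ) ^ 2 *
          ((Real.cos α / Real.sin α : ℝ) : ℂ)) *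
        Complex.exp (-2 * (Real.pi : ℂ) * Complex.I * (t : ℂ) * (ξ : ℂ) /
          ((Real.sin α : ℝ) : ℂ))

/-
For fixed `x`, `y ↦ A(u)(x, y)` is the Fourier transform of the integrable function
`t ↦ u(t + x/2) conj (u(t - x/2))`, so by injectivity of the Fourier transform on `L¹` the
ambiguity function determines the products `v(b + d) conj (v b)` for every `d` and almost every
`b`. The shear `(d, b) ↦ (b, b + d)` and Fubini turn this into `v b conj (v a) = u b conj (u a)`
for almost every pair `(a, b)`; fixing `a` with `u a ≠ 0` gives `v = c u` with
`c = conj (u a) / conj (v a)`, and `d = 0` gives `|v| = |u|`, hence `|c| = 1`.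
-/

open scoped FourierTransform ComplexConjugate

section FourierInjective

variable {V E : Type*} [NormedAddCommGroup V] [InnerProductSpace ℝ V] [FiniteDimensional ℝ V]
  [MeasurableSpace V] [BorelSpace V] [NormedAddCommGroup E] [NormedSpace ℂ E] [CompleteSpace E]

theorem MeasureTheory.Integrable.ae_eq_of_fourier_eq {f g : V → E} (hf : Integrable f)
    (hg : Integrable g) (h : 𝓕 f = 𝓕 g) : f =ᵐ[volume] g := by
  refine ae_eq_of_integral_contDiff_smul_eq hf.locallyIntegrable hg.locallyIntegrable
    fun φ hφ hφc => ?_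
  have hsupp : HasCompactSupport (fun x => (φ x : ℂ)) := hφc.comp_left Complex.ofReal_zero
  let ψ : SchwartzMap V ℂ := 𝓕⁻ (hsupp.toSchwartzMap (Complex.ofRealCLM.contDiff.comp hφ))
  have hψ : 𝓕 (ψ : V → ℂ) = fun x => (φ x : ℂ) := by
    rw [← SchwartzMap.fourier_coe, FourierTransform.fourier_fourierInv_eq]; rfl
  have self_adjoint (w : V → E) (hw : Integrable w) :
      ∫ x, φ x • w x = ∫ x, ψ x • 𝓕 w x := by
    have := VectorFourier.integral_fourierIntegral_smul_eq_flip (L := innerₗ V)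
      Real.continuous_fourierChar continuous_inner (ψ.integrable (μ := volume)) hw
    rw [flip_innerₗ] at this
    change ∫ ξ, 𝓕 (ψ : V → ℂ) ξ • w ξ = ∫ x, ψ x • 𝓕 w x at this
    simpa only [hψ, Complex.coe_smul] using this
  rw [self_adjoint f hf, self_adjoint g hg, h]

end FourierInjective

theorem exists_norm_eq_one_ae_eq_const_mul {α : Type*} [MeasurableSpace α] {μ : Measure α}
    {u v : α → ℂ} (hnorm : ∀ᵐ a ∂μ, ‖v a‖ = ‖u a‖)
    (h : ∀ᵐ a ∂μ, ∀ᵐ b ∂μ, v b * conj (v a) = u b * conj (u a)) :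
    ∃ c : ℂ, ‖c‖ = 1 ∧ v =ᵐ[μ] fun t => c * u t := by
  by_cases hu0 : u =ᵐ[μ] 0
  · refine ⟨1, norm_one, ?_⟩
    filter_upwards [hu0, hnorm] with t hut hvt
    rw [hut, Pi.zero_apply, norm_zero, norm_eq_zero] at hvt
    rw [hvt, hut, Pi.zero_apply, mul_zero]
  obtain ⟨a, hua, hva, hab⟩ : ∃ a, u a ≠ 0 ∧ ‖v a‖ = ‖u a‖ ∧
      ∀ᵐ b ∂μ, v b * conj (v a) = u b * conj (u a) :=
    ((Filter.not_eventually.1 hu0).and_eventually (hnorm.and h)).exists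
  have hva0 : conj (v a) ≠ 0 := by
    rw [map_ne_zero, ← norm_ne_zero_iff, hva, norm_ne_zero_iff]
    exact hua
  refine ⟨conj (u a) / conj (v a), ?_, ?_⟩
  · rw [norm_div, Complex.norm_conj, Complex.norm_conj, hva, div_self (norm_ne_zero_iff.2 hua)]
  · filter_upwards [hab] with b hb
    field_simp
    linear_combination hb

section Autocorrelation

variable {G : Type*} [MeasurableSpace G] [AddGroup G] [MeasurableAdd₂ G] {μ : Measure G}
  [SFinite μ] [μ.IsAddLeftInvariant] {u v : G → ℂ}

theorem ae_ae_mul_conj_eq_of_forall_ae_add_mul_conj_eq (hu : Measurable u) (hv : Measurable v)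
    (h : ∀ d, ∀ᵐ b ∂μ, v (b + d) * conj (v b) = u (b + d) * conj (u b)) :
    ∀ᵐ a ∂μ, ∀ᵐ b ∂μ, v b * conj (v a) = u b * conj (u a) := by
  let P : G × G → Prop := fun p => v p.2 * conj (v p.1) = u p.2 * conj (u p.1)
  have hP : MeasurableSet {p | P p} := measurableSet_eq_fun (by fun_prop) (by fun_prop)
  have shear := measurePreserving_prod_add_swap μ μ
  have h_shear : ∀ᵐ z ∂μ.prod μ, P (z.2, z.2 + z.1) :=
    (Measure.ae_prod_iff_ae_ae (hP.preimage shear.measurable)).2 (.of_forall h)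
  rw [← ae_map_iff shear.measurable.aemeasurable hP, shear.map_eq] at h_shear
  exact Measure.ae_ae_of_ae_prod h_shear

theorem exists_norm_eq_one_ae_eq_const_mul_of_forall_ae_add_mul_conj_eq (hu : Measurable u)
    (hv : Measurable v) (h : ∀ d, ∀ᵐ b ∂μ, v (b + d) * conj (v b) = u (b + d) * conj (u b)) :
    ∃ c : ℂ, ‖c‖ = 1 ∧ v =ᵐ[μ] fun t => c * u t := by
  refine exists_norm_eq_one_ae_eq_const_mul ?_
    (ae_ae_mul_conj_eq_of_forall_ae_add_mul_conj_eq hu hv h)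
  filter_upwards [h 0] with b hb
  simp only [add_zero, Complex.mul_conj'] at hb
  exact (sq_eq_sq₀ (norm_nonneg _) (norm_nonneg _)).1 (mod_cast hb)

end Autocorrelation

section Ambiguity

variable {u v : ℝ → ℂ}

theorem amb_congr_ae {u' : ℝ → ℂ} (h : u =ᵐ[volume] u') : amb u = amb u' := by
  ext x y
  have h_add := (measurePreserving_add_right volume (x / 2)).quasiMeasurePreserving.ae_eq_comp h
  have h_sub := (measurePreserving_sub_right volume (x / 2)).quasiMeasurePreserving.ae_eq_comp h
  refine integral_congr_ae ?_
  filter_upwards [h_add, h_sub] with t ht_add ht_sub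
  simp only [Function.comp_apply] at ht_add ht_sub
  rw [ht_add, ht_sub]

theorem amb_const_mul (c : ℂ) (x y : ℝ) :
    amb (fun t => c * u t) x y = ‖c‖ ^ 2 * amb u x y := by
  rw [amb, amb, ← integral_const_mul, ← Complex.mul_conj']
  congr 1 with t
  simp only [map_mul]
  ring

theorem amb_eq_fourier (x y : ℝ) :
    amb u x y = 𝓕 (fun t => u (t + x / 2) * conj (u (t - x / 2))) y := by
  rw [amb, Real.fourier_real_eq_integral_exp_smul]
  congr 1 with t
  rw [smul_eq_mul, mul_comm]
  push_cast
  ring_nf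

theorem MeasureTheory.MemLp.integrable_add_mul_conj_sub (hu : MemLp u 2) (s : ℝ) :
    Integrable (fun t => u (t + s) * conj (u (t - s))) := by
  have h_add : MemLp (fun t => u (t + s)) 2 :=
    hu.comp_measurePreserving (measurePreserving_add_right volume s)
  have h_sub : MemLp (fun t => u (t - s)) 2 :=
    hu.comp_measurePreserving (measurePreserving_sub_right volume s)
  exact h_add.integrable_mul h_sub.star

theorem ae_add_mul_conj_eq_of_amb_eq (hu : MemLp u 2) (hv : MemLp v 2) (h : amb v = amb u)
    (d : ℝ) : ∀ᵐ b, v (b + d) * conj (v b) = u (b + d) * conj (u b) := by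
  have h_fourier : (fun t => v (t + d / 2) * conj (v (t - d / 2))) =ᵐ[volume]
      fun t => u (t + d / 2) * conj (u (t - d / 2)) := by
    refine (hv.integrable_add_mul_conj_sub _).ae_eq_of_fourier_eq
      (hu.integrable_add_mul_conj_sub _) (funext fun y => ?_)
    rw [← amb_eq_fourier, ← amb_eq_fourier, h]
  filter_upwards [(measurePreserving_add_right volume (d / 2)).quasiMeasurePreserving.ae
    h_fourier] with b hb
  rwa [add_sub_cancel_right, add_assoc, add_halves] at hb

end Ambiguity

/-- Two L² functions have the same ambiguity function if and only if they agree up to a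
constant phase factor. -/
theorem amb_eq_iff_unimodular_multiple (u v : ℝ → ℂ)
    (hu : MeasureTheory.MemLp u 2 MeasureTheory.volume)
    (hv : MeasureTheory.MemLp v 2 MeasureTheory.volume) :
    (∀ x y : ℝ, amb v x y = amb u x y) ↔
      ∃ c : ℂ, ‖c‖ = 1 ∧ v =ᵐ[MeasureTheory.volume] fun t => c * u t := by
  constructor
  · intro h
    -- Fubini over the sheared set needs genuinely measurable representatives.
    have hu' := hu.1.ae_eq_mk
    have hv' := hv.1.ae_eq_mk
    have h' : amb (hv.1.mk v) = amb (hu.1.mk u) := by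
      rw [← amb_congr_ae hu', ← amb_congr_ae hv']
      exact funext₂ h
    obtain ⟨c, hc, hvc⟩ := exists_norm_eq_one_ae_eq_const_mul_of_forall_ae_add_mul_conj_eq
      hu.1.stronglyMeasurable_mk.measurable hv.1.stronglyMeasurable_mk.measurable
      (ae_add_mul_conj_eq_of_amb_eq (hu.ae_eq hu') (hv.ae_eq hv') h')
    exact ⟨c, hc, hv'.trans (hvc.trans (hu'.symm.fun_comp (c * ·)))⟩
  · rintro ⟨c, hc, hvc⟩ x y
    rw [amb_congr_ae hvc, amb_const_mul, hc, Complex.ofReal_one, one_pow, one_mul]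
end

section
/- Let a > 0 and define angles α₀ = π/2 and α_k = arctan(a²/k) for k ∈ ℤ \ {0}. If u, v ∈ L²(ℝ) are supported in [−a, a] and |F_{α_k} v| = |F_{α_k} u| for every k ∈ ℤ, then there exists c ∈ ℂ with |c| = 1 such that v = c·u. -/
open MeasureTheory

/-!
For `k ≠ 0` the angle `α_k` has `cot α_k = k / a²`, and for `sin α ≠ 0` the modulus of `F_α u` is,
up to dilation and a constant, that of the Fourier transform of the chirped function
`e^{-iπ cot α · t²} u(t)`. Equal moduli give equal autocorrelations of the chirped functions
(the autocorrelation has Fourier transform `|𝓕 ·|²` and compact support), and the chirp turns the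
autocorrelation at lag `x` into the Fourier transform of `t ↦ u t · conj (u (t - x))` at
frequency `k x / a²`. For fixed `x` this function lives on an interval of length `2a - |x|`,
shorter than `a² / |x|` unless `|x| = a`, so by Shannon–Whittaker its samples at spacing
`|x| / a²` determine it. Hence `u(t) conj (u(s)) = v(t) conj (v(s))` for almost all `(t, s)`,
which forces `v = c u` with `|c| = 1`.
-/

open Real Set FourierTransform ComplexConjugate Convolution

section FourierUniqueness

variable {P : ℝ} [Fact (0 < P)] {f : ℝ → ℂ}

lemma integrable_addCircle_mul (hf : Integrable f) (G : C(AddCircle P, ℂ)) :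
    Integrable (fun t : ℝ => G t * f t) :=
  hf.bdd_mul (G.continuous.comp (AddCircle.continuous_mk' P)).aestronglyMeasurable
    (.of_forall fun t => G.norm_coe_le_norm t)

lemma integral_addCircle_mul_eq_zero (hf : Integrable f)
    (h : ∀ n : ℤ, ∫ t : ℝ, fourier n (t : AddCircle P) * f t = 0) (G : C(AddCircle P, ℂ)) :
    ∫ t : ℝ, G t * f t = 0 := by
  let L : C(AddCircle P, ℂ) →L[ℂ] ℂ := LinearMap.mkContinuous
    { toFun := fun G => ∫ t : ℝ, G t * f t
      map_add' := fun G H => by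
        simp only [ContinuousMap.add_apply, add_mul]
        exact integral_add (integrable_addCircle_mul hf G) (integrable_addCircle_mul hf H)
      map_smul' := fun c G => by
        simp only [ContinuousMap.smul_apply, smul_eq_mul, mul_assoc, RingHom.id_apply]
        exact integral_const_mul c _ }
    (∫ t : ℝ, ‖f t‖) fun G => by
      rw [mul_comm, ← integral_const_mul]
      refine (norm_integral_le_integral_norm _).trans (integral_mono_of_nonneg
        (.of_forall fun t => norm_nonneg _) (hf.norm.const_mul _) (.of_forall fun t => ?_))
      simpa only [norm_mul] using mul_le_mul_of_nonneg_right (G.norm_coe_le_norm t) (norm_nonneg _)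
  have hL : L = 0 := by
    refine ContinuousLinearMap.ext_on
      (Submodule.dense_iff_topologicalClosure_eq_top.2 span_fourier_closure_eq_top) ?_
    rintro _ ⟨n, rfl⟩
    exact h n
  exact congr($hL G)

lemma exists_addCircle_eqOn_Icc {A B : ℝ} (hAB : B - A < P) {g : ℝ → ℂ} (hg : Continuous g) :
    ∃ G : C(AddCircle P, ℂ), ∀ t ∈ Icc A B, G t = g t := by
  obtain ⟨a₀, hA, hB⟩ : ∃ a₀, a₀ < A ∧ B < a₀ + P :=
    ⟨A - (P - (B - A)) / 2, by linarith, by linarith⟩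
  obtain ⟨φ, hφ0, hφ1, -⟩ := exists_continuous_zero_one_of_isClosed
    (s := {a₀, a₀ + P}) (t := Icc A B) (Set.toFinite _).isClosed isClosed_Icc
    (Set.disjoint_left.2 fun x hx hx' => by
      rcases hx with rfl | rfl <;> [linarith [hx'.1]; linarith [hx'.2]])
  let G₀ : ℝ → ℂ := fun t => (φ t : ℂ) * g t
  have hseam : G₀ a₀ = G₀ (a₀ + P) := by
    simp only [G₀, hφ0 (mem_insert _ _), hφ0 (mem_insert_of_mem _ rfl), Pi.zero_apply,
      Complex.ofReal_zero, zero_mul]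
  refine ⟨⟨_, AddCircle.liftIco_continuous hseam
    ((Complex.continuous_ofReal.comp φ.continuous).mul hg).continuousOn⟩, fun t ht => ?_⟩
  have ht' : t ∈ Ico a₀ (a₀ + P) := ⟨by linarith [ht.1], by linarith [ht.2]⟩
  simp [AddCircle.liftIco_coe_apply ht', G₀, hφ1 ht]

theorem ae_eq_zero_of_integral_fourier_mul_eq_zero {A B : ℝ} (hAB : B - A < P)
    (hf : Integrable f) (hsupp : ∀ t ∉ Icc A B, f t = 0)
    (h : ∀ n : ℤ, ∫ t : ℝ, fourier n (t : AddCircle P) * f t = 0) : f =ᵐ[volume] 0 := by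
  refine ae_eq_zero_of_integral_contDiff_smul_eq_zero hf.locallyIntegrable fun g hg _ => ?_
  obtain ⟨G, hG⟩ := exists_addCircle_eqOn_Icc hAB (Complex.continuous_ofReal.comp hg.continuous)
  rw [← integral_addCircle_mul_eq_zero hf h G]
  refine integral_congr_ae (.of_forall fun t => ?_)
  by_cases ht : t ∈ Icc A B
  · simp [hG t ht, Complex.real_smul]
  · simp [hsupp t ht]

end FourierUniqueness

lemma integral_fourier_mul_eq_fourier (P : ℝ) (f : ℝ → ℂ) (n : ℤ) :
    ∫ t : ℝ, fourier n (t : AddCircle P) * f t = 𝓕 f (-(n / P)) := by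
  rw [fourier_real_eq_integral_exp_smul]
  congr 1 with t
  rw [fourier_coe_apply, smul_eq_mul]
  congr 2
  push_cast
  ring

lemma fourier_sub_apply {f g : ℝ → ℂ} (hf : Integrable f) (hg : Integrable g) (ξ : ℝ) :
    𝓕 (f - g) ξ = 𝓕 f ξ - 𝓕 g ξ := by
  simp only [fourier_real_eq, Pi.sub_apply, smul_sub]
  exact integral_sub (by simpa [mul_comm] using (Real.fourierIntegral_convergent_iff ξ).2 hf)
    (by simpa [mul_comm] using (Real.fourierIntegral_convergent_iff ξ).2 hg)

/-- Shannon–Whittaker uniqueness: samples on `ωℤ`, at or above the Nyquist rate of the common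
support, determine the function. -/
theorem ae_eq_of_fourier_int_mul_eq {f g : ℝ → ℂ} {A B ω : ℝ} (hω : ω ≠ 0)
    (hAB : (B - A) * |ω| < 1) (hf : Integrable f) (hg : Integrable g)
    (hsf : ∀ t ∉ Icc A B, f t = 0) (hsg : ∀ t ∉ Icc A B, g t = 0)
    (h : ∀ m : ℤ, 𝓕 f (m * ω) = 𝓕 g (m * ω)) : f =ᵐ[volume] g := by
  have hω' : 0 < |ω| := abs_pos.2 hω
  have : Fact (0 < |ω|⁻¹) := ⟨inv_pos.2 hω'⟩
  rw [← sub_ae_eq_zero]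
  refine ae_eq_zero_of_integral_fourier_mul_eq_zero (P := |ω|⁻¹) (A := A) (B := B)
    (by rwa [← one_div, lt_div_iff₀ hω']) (hf.sub hg)
    (fun t ht => by simp [hsf t ht, hsg t ht]) fun n => ?_
  rw [integral_fourier_mul_eq_fourier, div_inv_eq_mul, fourier_sub_apply hf hg, sub_eq_zero]
  rcases abs_choice ω with hab | hab
  · convert h (-n) using 2 <;> (rw [hab]; push_cast; ring)
  · convert h n using 2 <;> (rw [hab]; ring)

/-- `f ⋆ conjReflect f` is the autocorrelation of `f`. -/
def conjReflect (f : ℝ → ℂ) (t : ℝ) : ℂ := conj (f (-t))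

/-- Its Fourier transform in `t` is, up to a phase, the slice `amb f x` of the ambiguity
function. -/
def lagProduct (f : ℝ → ℂ) (x t : ℝ) : ℂ := f t * conj (f (t - x))

section Autocorrelation

variable {f : ℝ → ℂ}

lemma integrable_conjReflect (hf : Integrable f) : Integrable (conjReflect f) :=
  (Complex.conjLIE.integrable_comp_iff (φ := fun t => f (-t))).2 hf.comp_neg

lemma fourier_conjReflect (f : ℝ → ℂ) (ξ : ℝ) : 𝓕 (conjReflect f) ξ = conj (𝓕 f ξ) := by
  rw [fourier_real_eq, fourier_real_eq, ← integral_conj, ← integral_neg_eq_self]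
  congr 1 with t
  simp [conjReflect, Circle.smul_def, ← Circle.coe_inv_eq_conj, ← AddChar.map_neg_eq_inv]

lemma fourier_convolution_conjReflect (hf : Integrable f) (ξ : ℝ) :
    𝓕 (f ⋆[ContinuousLinearMap.mul ℂ ℂ] conjReflect f) ξ = ((‖𝓕 f ξ‖ ^ 2 : ℝ) : ℂ) := by
  rw [Real.fourier_mul_convolution_eq hf (integrable_conjReflect hf), fourier_conjReflect,
    Complex.mul_conj, Complex.normSq_eq_norm_sq]

lemma convolution_conjReflect_apply (f : ℝ → ℂ) (x : ℝ) :
    (f ⋆[ContinuousLinearMap.mul ℂ ℂ] conjReflect f) x = ∫ t, lagProduct f x t := by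
  simp [convolution_def, conjReflect, lagProduct]

lemma lagProduct_eq_zero {a x t : ℝ} (hf : ∀ t ∉ Icc (-a) a, f t = 0)
    (ht : t ∉ Icc (max (-a) (x - a)) (min a (x + a))) : lagProduct f x t = 0 := by
  by_cases h₁ : t ∈ Icc (-a) a
  · by_cases h₂ : t - x ∈ Icc (-a) a
    · exact absurd ⟨max_le h₁.1 (by linarith [h₂.1]), le_min h₁.2 (by linarith [h₂.2])⟩ ht
    · simp [lagProduct, hf _ h₂]
  · simp [lagProduct, hf _ h₁]

lemma convolution_conjReflect_eq_zero {a x : ℝ} (hf : ∀ t ∉ Icc (-a) a, f t = 0)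
    (hx : x ∉ Icc (-(2 * a)) (2 * a)) :
    (f ⋆[ContinuousLinearMap.mul ℂ ℂ] conjReflect f) x = 0 := by
  rw [convolution_conjReflect_apply, ← integral_zero ℝ ℂ]
  refine integral_congr_ae (.of_forall fun t => lagProduct_eq_zero hf fun ht => hx ?_)
  constructor <;> linarith [ht.1, ht.2, le_max_left (-a) (x - a), le_max_right (-a) (x - a),
    min_le_left a (x + a), min_le_right a (x + a)]

theorem convolution_conjReflect_ae_eq_of_norm_fourier_eq {a : ℝ} (ha : 0 < a) {g : ℝ → ℂ}
    (hf : Integrable f) (hg : Integrable g)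
    (hsf : ∀ t ∉ Icc (-a) a, f t = 0) (hsg : ∀ t ∉ Icc (-a) a, g t = 0)
    (h : ∀ ξ, ‖𝓕 f ξ‖ = ‖𝓕 g ξ‖) :
    f ⋆[ContinuousLinearMap.mul ℂ ℂ] conjReflect f =ᵐ[volume]
      g ⋆[ContinuousLinearMap.mul ℂ ℂ] conjReflect g :=
  ae_eq_of_fourier_int_mul_eq (A := -(2 * a)) (B := 2 * a) (ω := (8 * a)⁻¹) (by positivity)
    (by rw [abs_of_pos (by positivity)]; field_simp; linarith)
    (hf.integrable_convolution _ (integrable_conjReflect hf))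
    (hg.integrable_convolution _ (integrable_conjReflect hg))
    (fun _ => convolution_conjReflect_eq_zero hsf) (fun _ => convolution_conjReflect_eq_zero hsg)
    fun m => by rw [fourier_convolution_conjReflect hf, fourier_convolution_conjReflect hg, h]

end Autocorrelation

noncomputable def chirp (c t : ℝ) : ℂ := Complex.exp (↑(-π * c * t ^ 2) * Complex.I)

lemma norm_chirp (c t : ℝ) : ‖chirp c t‖ = 1 := Complex.norm_exp_ofReal_mul_I _

lemma continuous_chirp (c : ℝ) : Continuous (chirp c) := by
  unfold chirp; fun_prop

lemma norm_frft_mul_sin {α : ℝ} (hα : sin α ≠ 0) (f : ℝ → ℂ) (η : ℝ) :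
    ‖frft α f (η * sin α)‖ = ‖𝓕 (fun t => chirp (cos α / sin α) t * f t) η‖ / √|sin α| := by
  have hphase : ‖Complex.exp (Complex.I * ((α : ℂ) - (π : ℂ) / 2) / 2)‖ = 1 := by
    rw [show Complex.I * ((α : ℂ) - (π : ℂ) / 2) / 2 = ↑((α - π / 2) / 2) * Complex.I by
      push_cast; ring]
    exact Complex.norm_exp_ofReal_mul_I _
  have hchirp : ‖Complex.exp (-(π : ℂ) * Complex.I * ((η * sin α : ℝ) : ℂ) ^ 2 *
      ((cos α / sin α : ℝ) : ℂ))‖ = 1 := by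
    rw [← norm_chirp (cos α / sin α) (η * sin α), chirp]
    congr 2
    push_cast
    ring
  rw [frft, if_neg hα, fourier_real_eq_integral_exp_smul, norm_mul, norm_mul, norm_div, hphase,
    hchirp, Complex.norm_real, norm_eq_abs, abs_of_nonneg (sqrt_nonneg _), mul_one, one_div,
    inv_mul_eq_div]
  congr 2
  refine integral_congr_ae (.of_forall fun t => ?_)
  have hs : (sin α : ℂ) ≠ 0 := Complex.ofReal_ne_zero.2 hα
  have hkernel : -2 * (π : ℂ) * Complex.I * t * ((η * sin α : ℝ) : ℂ) / (sin α : ℂ) =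
      ↑(-2 * π * t * η) * Complex.I := by
    rw [Complex.ofReal_mul]
    field_simp
    push_cast
    ring
  simp only [chirp, smul_eq_mul, hkernel]
  push_cast
  ring_nf

lemma convolution_chirp_conjReflect (f : ℝ → ℂ) (c x : ℝ) :
    ((fun t => chirp c t * f t) ⋆[ContinuousLinearMap.mul ℂ ℂ]
      conjReflect (fun t => chirp c t * f t)) x =
    Complex.exp (↑(π * c * x ^ 2) * Complex.I) * 𝓕 (lagProduct f x) (c * x) := by
  rw [convolution_conjReflect_apply, fourier_real_eq_integral_exp_smul, ← integral_const_mul]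
  congr 1 with t
  have hphase : chirp c t * conj (chirp c (t - x)) =
      Complex.exp (↑(π * c * x ^ 2) * Complex.I) *
        Complex.exp (↑(-2 * π * t * (c * x)) * Complex.I) := by
    simp only [chirp, ← Complex.exp_conj, ← Complex.exp_add, map_mul, Complex.conj_ofReal,
      Complex.conj_I]
    congr 1
    push_cast
    ring
  simp only [lagProduct, map_mul, smul_eq_mul]
  linear_combination (f t * conj (f (t - x))) * hphase

theorem ae_fourier_lagProduct_eq_of_norm_fourier_chirp_eq {a c : ℝ} (ha : 0 < a) {u v : ℝ → ℂ}
    (hu : Integrable u) (hv : Integrable v)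
    (hsu : ∀ t ∉ Icc (-a) a, u t = 0) (hsv : ∀ t ∉ Icc (-a) a, v t = 0)
    (h : ∀ η, ‖𝓕 (fun t => chirp c t * u t) η‖ = ‖𝓕 (fun t => chirp c t * v t) η‖) :
    ∀ᵐ x, 𝓕 (lagProduct u x) (c * x) = 𝓕 (lagProduct v x) (c * x) := by
  have hint {w : ℝ → ℂ} (hw : Integrable w) : Integrable (fun t => chirp c t * w t) :=
    hw.bdd_mul (continuous_chirp c).aestronglyMeasurable (.of_forall fun t => (norm_chirp c t).le)
  have hsupp {w : ℝ → ℂ} (hw : ∀ t ∉ Icc (-a) a, w t = 0) :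
      ∀ t ∉ Icc (-a) a, chirp c t * w t = 0 := fun t ht => by rw [hw t ht, mul_zero]
  filter_upwards [convolution_conjReflect_ae_eq_of_norm_fourier_eq ha (hint hu) (hint hv)
    (hsupp hsu) (hsupp hsv) h] with x hx
  rw [convolution_chirp_conjReflect, convolution_chirp_conjReflect] at hx
  exact mul_left_cancel₀ (Complex.exp_ne_zero _) hx

section LagProduct

variable {u v : ℝ → ℂ}

lemma integrable_lagProduct (hu : MemLp u 2) (x : ℝ) : Integrable (lagProduct u x) :=
  hu.integrable_mul (Complex.conjCLE.toContinuousLinearMap.comp_memLp'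
    (hu.comp_measurePreserving (measurePreserving_sub_right volume x)))

theorem lagProduct_ae_eq_of_fourier_eq {a x : ℝ} (ha : 0 < a) (hx : x ≠ 0) (hxa : |x| ≠ a)
    (hu : MemLp u 2) (hv : MemLp v 2)
    (hsu : ∀ t ∉ Icc (-a) a, u t = 0) (hsv : ∀ t ∉ Icc (-a) a, v t = 0)
    (h : ∀ k : ℤ,
      𝓕 (lagProduct u x) (k * (x / a ^ 2)) = 𝓕 (lagProduct v x) (k * (x / a ^ 2))) :
    lagProduct u x =ᵐ[volume] lagProduct v x := by
  have hlength : min a (x + a) - max (-a) (x - a) = 2 * a - |x| := by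
    rcases le_total 0 x with h0 | h0
    · rw [min_eq_left (by linarith), max_eq_right (by linarith), abs_of_nonneg h0]; ring
    · rw [min_eq_right (by linarith), max_eq_left (by linarith), abs_of_nonpos h0]; ring
  have hgap : 0 < (a - |x|) ^ 2 := by positivity
  refine ae_eq_of_fourier_int_mul_eq (div_ne_zero hx (by positivity)) ?_
    (integrable_lagProduct hu x) (integrable_lagProduct hv x)
    (fun _ => lagProduct_eq_zero hsu) (fun _ => lagProduct_eq_zero hsv) h
  rw [hlength, abs_div, abs_of_pos (by positivity : 0 < a ^ 2), ← mul_div_assoc,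
    div_lt_one (by positivity)]
  nlinarith [abs_nonneg x]

lemma lagProduct_ae_eq_of_ae_eq {u' : ℝ → ℂ} (h : u =ᵐ[volume] u') (x : ℝ) :
    lagProduct u x =ᵐ[volume] lagProduct u' x := by
  filter_upwards [h, (measurePreserving_sub_right volume x).quasiMeasurePreserving.ae_eq_comp h]
    with t ht ht'
  simp_all [lagProduct]

/-- Fubini through the shear `(x, t) ↦ (t, t - x)`. -/
lemma ae_ae_mul_conj_eq_of_measurable (hu : Measurable u) (hv : Measurable v)
    (h : ∀ᵐ x, lagProduct u x =ᵐ[volume] lagProduct v x) :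
    ∀ᵐ t, ∀ᵐ s, u t * conj (u s) = v t * conj (v s) := by
  have hmeas : MeasurableSet {z : ℝ × ℝ | lagProduct u z.1 z.2 = lagProduct v z.1 z.2} :=
    measurableSet_eq_fun (by unfold lagProduct; fun_prop) (by unfold lagProduct; fun_prop)
  filter_upwards [(Measure.ae_ae_comm hmeas).1 h] with t ht
  filter_upwards [(Measure.measurePreserving_sub_left volume t).quasiMeasurePreserving.ae ht]
    with s hs
  simpa [lagProduct] using hs

theorem ae_ae_mul_conj_eq_of_ae_lagProduct_eq (hu : AEStronglyMeasurable u)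
    (hv : AEStronglyMeasurable v) (h : ∀ᵐ x, lagProduct u x =ᵐ[volume] lagProduct v x) :
    ∀ᵐ t, ∀ᵐ s, u t * conj (u s) = v t * conj (v s) := by
  have h' : ∀ᵐ x, lagProduct (hu.mk u) x =ᵐ[volume] lagProduct (hv.mk v) x := by
    filter_upwards [h] with x hx
    exact ((lagProduct_ae_eq_of_ae_eq hu.ae_eq_mk x).symm.trans hx).trans
      (lagProduct_ae_eq_of_ae_eq hv.ae_eq_mk x)
  filter_upwards [ae_ae_mul_conj_eq_of_measurable hu.stronglyMeasurable_mk.measurable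
    hv.stronglyMeasurable_mk.measurable h', hu.ae_eq_mk, hv.ae_eq_mk] with t ht hut hvt
  filter_upwards [ht, hu.ae_eq_mk, hv.ae_eq_mk] with s hs hus hvs
  rwa [hut, hvt, hus, hvs]

end LagProduct

theorem exists_norm_eq_one_ae_eq_mul {α : Type*} [MeasurableSpace α] {μ : Measure α}
    {u v : α → ℂ} (h : ∀ᵐ t ∂μ, ∀ᵐ s ∂μ, u t * conj (u s) = v t * conj (v s)) :
    ∃ c : ℂ, ‖c‖ = 1 ∧ v =ᵐ[μ] fun s => c * u s := by
  by_cases hu : u =ᵐ[μ] 0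
  · refine ⟨1, norm_one, ?_⟩
    suffices hv : v =ᵐ[μ] 0 by filter_upwards [hu, hv] with s hus hvs; simp_all
    by_contra hv
    obtain ⟨t, hvt, hut, ht⟩ := ((Filter.not_eventually.1 hv).and_eventually (hu.and h)).exists
    rw [Pi.zero_apply] at hvt hut
    refine hv (ht.mono fun s hs => ?_)
    simpa [hut, hvt] using hs.symm
  obtain ⟨t₀, hut₀, ht₀⟩ := ((Filter.not_eventually.1 hu).and_eventually h).exists
  rw [Pi.zero_apply] at hut₀
  have hvt₀ : v t₀ ≠ 0 := fun hvt₀ => hu (ht₀.mono fun s hs => by simpa [hvt₀, hut₀] using hs)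
  set c := conj (u t₀ / v t₀)
  have hvc : v =ᵐ[μ] fun s => c * u s := by
    filter_upwards [ht₀] with s hs
    have := congrArg conj hs
    simp only [map_mul, Complex.conj_conj] at this
    have hvt₀' : conj (v t₀) ≠ 0 := (map_ne_zero _).2 hvt₀
    simp only [c, map_div₀]
    field_simp
    linear_combination -this
  refine ⟨c, ?_, hvc⟩
  -- `|c| = 1` is read off the identity at a pair `(t₁, s)` with `u t₁ ≠ 0 ≠ u s`.
  obtain ⟨t₁, hut₁, ht₁, hvt₁⟩ :=
    ((Filter.not_eventually.1 hu).and_eventually (h.and hvc)).exists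
  obtain ⟨s, hus, hs, hvs⟩ := ((Filter.not_eventually.1 hu).and_eventually (ht₁.and hvc)).exists
  rw [Pi.zero_apply] at hut₁ hus
  rw [hvt₁, hvs, map_mul] at hs
  have hcc : c * conj c = 1 := by
    refine mul_left_cancel₀ (mul_ne_zero hut₁ ((map_ne_zero (starRingEnd ℂ)).2 hus)) ?_
    linear_combination -hs
  rw [Complex.mul_conj, Complex.normSq_eq_norm_sq] at hcc
  exact (pow_eq_one_iff_of_nonneg (norm_nonneg c) two_ne_zero).1 (by exact_mod_cast hcc)

lemma integrable_of_memLp_two_of_eq_zero {f : ℝ → ℂ} {a : ℝ} (hf : MemLp f 2)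
    (hsupp : ∀ t ∉ Icc (-a) a, f t = 0) : Integrable f :=
  IntegrableOn.integrable_of_forall_notMem_eq_zero ((hf.restrict _).integrable one_le_two) hsupp

lemma sin_ne_zero_and_cos_div_sin_eq {a : ℝ} (ha : 0 < a) (k : ℤ) {α : ℝ}
    (hα : α = if k = 0 then π / 2 else arctan (a ^ 2 / k)) :
    sin α ≠ 0 ∧ cos α / sin α = k / a ^ 2 := by
  split_ifs at hα with hk
  · simp [hα, hk]
  · have hx : a ^ 2 / k ≠ 0 := div_ne_zero (by positivity) (Int.cast_ne_zero.2 hk)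
    rw [hα, sin_arctan]
    refine ⟨div_ne_zero hx (by positivity), ?_⟩
    rw [← sin_arctan, ← inv_div, ← tan_eq_sin_div_cos, tan_arctan, inv_div]

/-- Theorem 5.1 (3): functions supported in [-a, a] are determined, up to a unimodular
constant, by the moduli of the countably many fractional Fourier transforms of orders
α₀ = π/2 and αₖ = arctan (a²/k), k ∈ ℤ \ {0}. -/
theorem phase_retrieval_countable (a : ℝ) (ha : 0 < a) (u v : ℝ → ℂ)
    (hu2 : MeasureTheory.MemLp u 2 MeasureTheory.volume)
    (hv2 : MeasureTheory.MemLp v 2 MeasureTheory.volume)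
    (hsu : ∀ t : ℝ, t ∉ Set.Icc (-a) a → u t = 0)
    (hsv : ∀ t : ℝ, t ∉ Set.Icc (-a) a → v t = 0)
    (α : ℤ → ℝ)
    (hα : α = fun k : ℤ => if k = 0 then Real.pi / 2 else Real.arctan (a ^ 2 / (k : ℝ)))
    (h : ∀ k : ℤ, ∀ ξ : ℝ, ‖frft (α k) v ξ‖ = ‖frft (α k) u ξ‖) :
    ∃ c : ℂ, ‖c‖ = 1 ∧ v =ᵐ[MeasureTheory.volume] fun t => c * u t := by
  have hchirp (k : ℤ) (η : ℝ) : ‖𝓕 (fun t => chirp (k / a ^ 2) t * u t) η‖ =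
      ‖𝓕 (fun t => chirp (k / a ^ 2) t * v t) η‖ := by
    obtain ⟨hsin, hcot⟩ := sin_ne_zero_and_cos_div_sin_eq ha k (congrFun hα k)
    have := h k (η * sin (α k))
    rw [norm_frft_mul_sin hsin, norm_frft_mul_sin hsin, hcot] at this
    exact (div_left_inj' (by positivity)).1 this.symm
  have hfourier : ∀ᵐ x, ∀ k : ℤ,
      𝓕 (lagProduct u x) (k * (x / a ^ 2)) = 𝓕 (lagProduct v x) (k * (x / a ^ 2)) := by
    refine ae_all_iff.2 fun k => ?_
    filter_upwards [ae_fourier_lagProduct_eq_of_norm_fourier_chirp_eq ha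
      (integrable_of_memLp_two_of_eq_zero hu2 hsu) (integrable_of_memLp_two_of_eq_zero hv2 hsv)
      hsu hsv (hchirp k)] with x hx
    rwa [div_mul_eq_mul_div, mul_div_assoc] at hx
  have hgeneric : ∀ᵐ x : ℝ, x ∉ ({0, a, -a} : Set ℝ) :=
    measure_eq_zero_iff_ae_notMem.1 ((toFinite _).measure_zero _)
  have hlag : ∀ᵐ x, lagProduct u x =ᵐ[volume] lagProduct v x := by
    filter_upwards [hfourier, hgeneric] with x hx hx'
    refine lagProduct_ae_eq_of_fourier_eq ha (fun h0 => hx' (by simp [h0])) (fun hxa => ?_)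
      hu2 hv2 hsu hsv hx
    rcases (abs_eq ha.le).1 hxa with rfl | rfl <;> simp at hx'
  exact exists_norm_eq_one_ae_eq_mul (ae_ae_mul_conj_eq_of_ae_lagProduct_eq hu2.1 hv2.1 hlag)
end

section
/- Let (a_k) and (b_k) be finitely supported complex sequences such that ∑_k b_k·conj(b_{k−j})·e^{2πikt} = ∑_k a_k·conj(a_{k−j})·e^{2πikt} for every t ∈ ℝ and every j ∈ ℤ, and suppose (a_k) is not identically zero. Then there exists c ∈ ℂ with |c| = 1 such that b_k = c·a_k for all k ∈ ℤ. -/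
/-!
Two trigonometric polynomials that agree on `ℝ` have the same Fourier coefficients, so the
hypothesis says `B k * conj (B m) = A k * conj (A m)` for all `k, m`. Taking `k = m = k₀` with
`A k₀ ≠ 0` gives `‖B k₀‖ = ‖A k₀‖`, and then `m = k₀` gives `B k = c * A k` with
`c = conj (A k₀) / conj (B k₀)`.
-/

open Complex Real AddCircle

theorem fourierCoeff_finsum_smul_fourier {T : ℝ} [Fact (0 < T)] (f : ℤ → ℂ)
    (hf : (Function.support f).Finite) :
    fourierCoeff (T := T) (fun x => ∑ᶠ k, f k • fourier k x) = f := by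
  classical
  have hsum : (fun x : AddCircle T => ∑ᶠ k, f k • fourier k x) =
      ∑ k ∈ hf.toFinset, f k • ⇑(fourier k) := by
    ext x
    rw [finsum_eq_sum_of_support_subset _ (s := hf.toFinset)]
    · simp
    · intro k hk
      simp only [Function.mem_support, Set.Finite.coe_toFinset] at hk ⊢
      exact left_ne_zero_of_smul hk
  have hint (k : ℤ) : MeasureTheory.Integrable (fourier (T := T) k) haarAddCircle :=
    (map_continuous _).integrable_of_hasCompactSupport (.of_compactSpace _)
  ext n
  rw [hsum, fourierCoeff.sum _ _ fun k _ => (hint k).smul (f k), Finset.sum_apply]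
  simp only [fourierCoeff.const_smul, fourierCoeff_fourier, Pi.single_apply, smul_eq_mul,
    mul_ite, mul_one, mul_zero, Finset.sum_ite_eq, Set.Finite.mem_toFinset, Function.mem_support]
  exact ite_eq_left_iff.mpr fun hn => (not_not.mp hn).symm

theorem eq_of_forall_finsum_mul_exp_eq (f g : ℤ → ℂ) (hf : (Function.support f).Finite)
    (hg : (Function.support g).Finite)
    (h : ∀ t : ℝ,
      ∑ᶠ k : ℤ, f k * exp (2 * π * I * k * t) = ∑ᶠ k : ℤ, g k * exp (2 * π * I * k * t)) :
    f = g := by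
  have : Fact ((0 : ℝ) < 1) := ⟨one_pos⟩
  rw [← fourierCoeff_finsum_smul_fourier (T := 1) f hf,
    ← fourierCoeff_finsum_smul_fourier (T := 1) g hg]
  congr 1
  ext x
  induction x using QuotientAddGroup.induction_on with
  | H t => simpa [fourier_coe_apply] using h t

theorem exists_norm_eq_one_of_mul_conj_eq {ι 𝕜 : Type*} [RCLike 𝕜] {A B : ι → 𝕜}
    (hAB : ∀ k m, B k * (starRingEnd 𝕜) (B m) = A k * (starRingEnd 𝕜) (A m)) (hA : A ≠ 0) :
    ∃ c : 𝕜, ‖c‖ = 1 ∧ ∀ k, B k = c * A k := by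
  obtain ⟨k₀, hk₀⟩ := Function.ne_iff.mp hA
  have hnorm : ‖B k₀‖ = ‖A k₀‖ := by
    have := hAB k₀ k₀
    rw [RCLike.mul_conj, RCLike.mul_conj] at this
    exact (pow_left_inj₀ (norm_nonneg _) (norm_nonneg _) two_ne_zero).mp (by exact_mod_cast this)
  have hB : (starRingEnd 𝕜) (B k₀) ≠ 0 := by
    rw [map_ne_zero, ← norm_ne_zero_iff, hnorm, norm_ne_zero_iff]
    exact hk₀
  refine ⟨(starRingEnd 𝕜) (A k₀) / (starRingEnd 𝕜) (B k₀), ?_, fun k => ?_⟩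
  · rw [norm_div, RCLike.norm_conj, RCLike.norm_conj, hnorm, div_self (norm_ne_zero_iff.mpr hk₀)]
  · rw [div_mul_eq_mul_div, eq_div_iff hB, mul_comm _ (A k)]
    exact hAB k k₀

/-- If two finitely supported sequences have all their autocorrelation trigonometric
polynomials equal, then they differ by a unimodular constant. -/
theorem autocorrelation_determines (A B : ℤ → ℂ)
    (hA : (Function.support A).Finite) (hB : (Function.support B).Finite)
    (hA0 : A ≠ 0)
    (h : ∀ (j : ℤ) (t : ℝ),
      (∑ᶠ k : ℤ, B k * (starRingEnd ℂ) (B (k - j)) *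
          Complex.exp (2 * (Real.pi : ℂ) * Complex.I * (k : ℂ) * (t : ℂ)))
        = ∑ᶠ k : ℤ, A k * (starRingEnd ℂ) (A (k - j)) *
          Complex.exp (2 * (Real.pi : ℂ) * Complex.I * (k : ℂ) * (t : ℂ))) :
    ∃ c : ℂ, ‖c‖ = 1 ∧ ∀ k : ℤ, B k = c * A k := by
  have hcoef (j : ℤ) :
      (fun k => B k * (starRingEnd ℂ) (B (k - j))) = fun k => A k * (starRingEnd ℂ) (A (k - j)) :=
    eq_of_forall_finsum_mul_exp_eq _ _ (hB.subset (Function.support_mul_subset_left _ _))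
      (hA.subset (Function.support_mul_subset_left _ _)) (h j)
  refine exists_norm_eq_one_of_mul_conj_eq (fun k m => ?_) hA0
  simpa using congrFun (hcoef (k - m)) k
end

section
/- Let α ∈ ℝ with α not a multiple of π/2, and let u(t) = ∑_{j=1}^N c_j γ(t − t_j) and v(t) = ∑_{j=1}^M κ_j γ(t − τ_j), where γ(t) = e^{−πt²}, the t_j are pairwise distinct reals, the τ_j are pairwise distinct reals, and c_j, κ_j are nonzero complex numbers. If |F_α v| = |F_α u| on ℝ, then M = N and (after reordering) τ_j = t_j and there is c ∈ ℂ with |c| = 1 such that κ_j = c·c_j for all j; in particular v = c·u. -/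
open MeasureTheory

/-!
A Gaussian integral shows that the transform of `∑ₓ a(x) γ(t - x)` is, up to a nonzero
constant and the factor `e^{-πξ²}`, the exponential sum `∑ₓ a(x) w(x) e^{μ(x) ξ}` with
nonvanishing weights `w(x) = e^{-π cos α e^{iα} x²}` and exponents `μ(x) = -2π e^{iα} x`.
Squaring its modulus gives an exponential sum with exponents `μ(x) + conj μ(y)`; when
`sin α cos α ≠ 0` these are pairwise distinct, so by the linear independence of the characters
`ξ ↦ e^{λξ}` the modulus determines every product `a(x) conj (a(y))`, and these products
determine `a` up to a unimodular constant.
-/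

open Complex ComplexConjugate Real

noncomputable def cexpMulHom (μ : ℂ) : Multiplicative ℝ →* ℂ where
  toFun x := cexp (μ * x.toAdd)
  map_one' := by simp
  map_mul' x y := by simp [mul_add, Complex.exp_add]

theorem cexpMulHom_injective : Function.Injective cexpMulHom := by
  intro μ ν h
  have hμ : HasDerivAt (fun t : ℝ => cexp (μ * t)) μ 0 := by
    simpa using ((hasDerivAt_id (0 : ℝ)).ofReal_comp.const_mul μ).cexp
  have hν : HasDerivAt (fun t : ℝ => cexp (ν * t)) ν 0 := by
    simpa using ((hasDerivAt_id (0 : ℝ)).ofReal_comp.const_mul ν).cexp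
  have hμν : (fun t : ℝ => cexp (μ * t)) = fun t : ℝ => cexp (ν * t) :=
    funext fun t => DFunLike.congr_fun h (Multiplicative.ofAdd t)
  rw [hμν] at hμ
  exact hμ.unique hν

/-- Dedekind's independence of characters, applied to the characters of `(ℝ, +)`. -/
theorem linearIndependent_cexp_mul : LinearIndependent ℂ fun (μ : ℂ) (ξ : ℝ) => cexp (μ * ξ) :=
  (linearIndependent_monoidHom (Multiplicative ℝ) ℂ).comp _ cexpMulHom_injective

theorem sum_cexp_mul_conj_sum_cexp {ι : Type*} (T : Finset ι) (a μ : ι → ℂ) (ξ : ℝ) :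
    (∑ x ∈ T, a x * cexp (μ x * ξ)) * conj (∑ x ∈ T, a x * cexp (μ x * ξ)) =
      ∑ p ∈ T ×ˢ T, a p.1 * conj (a p.2) * cexp ((μ p.1 + conj (μ p.2)) * ξ) := by
  rw [map_sum, Finset.sum_mul_sum, Finset.sum_product]
  refine Finset.sum_congr rfl fun x _ => Finset.sum_congr rfl fun y _ => ?_
  rw [map_mul, ← exp_conj, map_mul, conj_ofReal, add_mul, Complex.exp_add]
  ring

theorem mul_conj_eq_of_norm_sum_cexp_eq {ι : Type*} {T : Finset ι} {μ a b : ι → ℂ}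
    (hμ : Function.Injective fun p : ι × ι => μ p.1 + conj (μ p.2))
    (h : ∀ ξ : ℝ, ‖∑ x ∈ T, a x * cexp (μ x * ξ)‖ = ‖∑ x ∈ T, b x * cexp (μ x * ξ)‖) :
    ∀ x ∈ T, ∀ y ∈ T, a x * conj (a y) = b x * conj (b y) := by
  have hsq : ∀ ξ : ℝ, ∑ p ∈ T ×ˢ T,
      (a p.1 * conj (a p.2) - b p.1 * conj (b p.2)) • cexp ((μ p.1 + conj (μ p.2)) * ξ) = 0 := by
    intro ξ
    simp only [smul_eq_mul, sub_mul, Finset.sum_sub_distrib, ← sum_cexp_mul_conj_sum_cexp,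
      mul_conj, normSq_eq_norm_sq, h, sub_self]
  intro x hx y hy
  have hcoeff := linearIndependent_iff'.mp (linearIndependent_cexp_mul.comp _ hμ) (T ×ˢ T) _
    (funext fun ξ => by simpa [Finset.sum_apply] using hsq ξ) (x, y) (Finset.mk_mem_product hx hy)
  exact sub_eq_zero.mp hcoeff

theorem exists_norm_eq_one_of_mul_conj_eq_s17 {X : Type*} {a b : X → ℂ}
    (h : ∀ x y, a x * conj (a y) = b x * conj (b y)) : ∃ c : ℂ, ‖c‖ = 1 ∧ ∀ x, a x = c * b x := by
  by_cases hb : ∀ y, b y = 0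
  · refine ⟨1, norm_one, fun x => ?_⟩
    have := h x x
    rw [hb x, zero_mul, mul_conj, ofReal_eq_zero, normSq_eq_zero] at this
    rw [this, hb x, mul_zero]
  obtain ⟨y, hy⟩ := not_forall.mp hb
  have hnorm : ‖a y‖ = ‖b y‖ := by
    have := h y y
    rw [mul_conj, mul_conj, ofReal_inj, normSq_eq_norm_sq, normSq_eq_norm_sq] at this
    exact (pow_left_inj₀ (norm_nonneg _) (norm_nonneg _) two_ne_zero).mp this
  have hay : a y ≠ 0 := norm_ne_zero_iff.mp (hnorm ▸ norm_ne_zero_iff.mpr hy)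
  refine ⟨a y / b y, by rw [norm_div, hnorm, div_self (norm_ne_zero_iff.mpr hy)], fun x => ?_⟩
  have hx := h x y
  have hyy := h y y
  field_simp
  apply mul_right_cancel₀ ((map_ne_zero conj).mpr hay)
  linear_combination b y * hx - b x * hyy

/-- The exponent produced by `integral_cexp_quadratic` in `frft`, with `p = π`, `S = sin α` and
`C = cos α`. -/
theorem frft_exponent_eq (p S C ξ x : ℂ) (hS : S ≠ 0) (hp : p ≠ 0) (h : C ^ 2 + S ^ 2 = 1) :
    -p * I * ξ ^ 2 * (C / S) + (-p * x ^ 2 -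
        (2 * p * x - 2 * p * I * ξ / S) ^ 2 / (4 * (-p * (1 + I * (C / S))))) =
      -p * ξ ^ 2 + -p * C * (C + S * I) * x ^ 2 + -2 * p * (C + S * I) * x * ξ := by
  have hinv : (1 + I * (C / S)) * (S * (S - I * C)) = 1 := by
    field_simp
    linear_combination h - C ^ 2 * I_sq
  rw [show (2 * p * x - 2 * p * I * ξ / S) ^ 2 / (4 * (-p * (1 + I * (C / S)))) =
    -p * (x - I * ξ / S) ^ 2 * (1 + I * (C / S))⁻¹ by field_simp; ring,
    inv_eq_of_mul_eq_one_right hinv]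
  field_simp
  linear_combination S * x ^ 2 * h + (2 * S * C * x * ξ + ξ ^ 2 * S - I * ξ ^ 2 * C) * I_sq

theorem injective_add_conj_of_sin_ne_zero_of_cos_ne_zero {α : ℝ} (hS : Real.sin α ≠ 0)
    (hC : Real.cos α ≠ 0) :
    Function.Injective fun p : ℝ × ℝ =>
      -2 * π * cexp (α * I) * p.1 + conj (-2 * π * cexp (α * I) * p.2) := by
  intro p q hpq
  have hre := congrArg re hpq
  have him := congrArg im hpq
  simp only [neg_mul, map_neg, map_mul, conj_ofReal, add_re, neg_re, mul_re, re_ofNat, ofReal_re,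
    im_ofNat, ofReal_im, mul_zero, sub_zero, exp_ofReal_mul_I_re, mul_im, zero_mul, add_zero,
    exp_ofReal_mul_I_im, conj_re, conj_im, neg_zero, mul_neg, add_im, neg_im, zero_add,
    neg_neg] at hre him
  have h2π : 2 * π ≠ 0 := mul_ne_zero two_ne_zero pi_ne_zero
  have hsum : p.1 + p.2 = q.1 + q.2 :=
    mul_left_cancel₀ (mul_ne_zero h2π hC) (by linear_combination -hre)
  have hdiff : p.1 - p.2 = q.1 - q.2 :=
    mul_left_cancel₀ (mul_ne_zero h2π hS) (by linear_combination -him)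
  exact Prod.ext (by linarith) (by linarith)

noncomputable def gaussianComb : (ℝ →₀ ℂ) →ₗ[ℂ] ℝ → ℂ :=
  Finsupp.linearCombination ℂ fun x t => cexp (-π * ((t : ℂ) - x) ^ 2)

theorem gaussianComb_apply_of_support_subset {a : ℝ →₀ ℂ} {T : Finset ℝ} (hT : a.support ⊆ T)
    (t : ℝ) : gaussianComb a t = ∑ x ∈ T, a x * cexp (-π * ((t : ℂ) - x) ^ 2) := by
  rw [gaussianComb, Finsupp.linearCombination_apply, Finsupp.sum_of_support_subset _ hT]
  · simp [Finset.sum_apply]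
  · simp

theorem gaussian_mul_frft_kernel_eq_cexp_quadratic (r S : ℂ) (x ξ t : ℝ) :
    cexp (-π * ((t : ℂ) - x) ^ 2) * cexp (-π * I * (t : ℂ) ^ 2 * r) *
        cexp (-2 * π * I * t * ξ / S) =
      cexp (-π * (1 + I * r) * t ^ 2 + (2 * π * x - 2 * π * I * ξ / S) * t + -π * x ^ 2) := by
  simp_rw [← Complex.exp_add]
  ring_nf

theorem integral_gaussian_mul_frft_kernel {α : ℝ} (hS : Real.sin α ≠ 0) (x ξ : ℝ) :
    cexp (-π * I * (ξ : ℂ) ^ 2 * ((Real.cos α / Real.sin α : ℝ) : ℂ)) *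
      ∫ t : ℝ, cexp (-π * ((t : ℂ) - x) ^ 2) *
        cexp (-π * I * (t : ℂ) ^ 2 * ((Real.cos α / Real.sin α : ℝ) : ℂ)) *
        cexp (-2 * π * I * t * ξ / ((Real.sin α : ℝ) : ℂ)) =
      (π / (π * (1 + I * ((Real.cos α / Real.sin α : ℝ) : ℂ)))) ^ (1 / 2 : ℂ) *
        cexp (-π * (ξ : ℂ) ^ 2) *
        (cexp (-π * Real.cos α * cexp (α * I) * (x : ℂ) ^ 2) *
          cexp (-2 * π * cexp (α * I) * x * ξ)) := by
  have hb (r : ℝ) : (-π * (1 + I * r)).re < 0 := by simpa using pi_pos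
  simp_rw [gaussian_mul_frft_kernel_eq_cexp_quadratic]
  rw [integral_cexp_quadratic (hb _), show ∀ z : ℂ, -(-π * z) = π * z from fun z => by ring]
  rw [mul_left_comm]
  conv_rhs => rw [mul_assoc]
  congr 1
  simp only [← Complex.exp_add]
  congr 1
  rw [exp_mul_I, ← ofReal_cos, ← ofReal_sin, ofReal_div]
  linear_combination frft_exponent_eq π (Real.sin α) (Real.cos α) ξ x (ofReal_ne_zero.mpr hS)
    (ofReal_ne_zero.mpr pi_ne_zero) (by exact_mod_cast Real.cos_sq_add_sin_sq α)

theorem frft_gaussianComb {α : ℝ} (hS : Real.sin α ≠ 0) :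
    ∃ K : ℂ, K ≠ 0 ∧ ∀ (a : ℝ →₀ ℂ) (T : Finset ℝ), a.support ⊆ T → ∀ ξ : ℝ,
      frft α (gaussianComb a) ξ = K * cexp (-π * (ξ : ℂ) ^ 2) *
        ∑ x ∈ T, a x * cexp (-π * Real.cos α * cexp (α * I) * (x : ℂ) ^ 2) *
          cexp (-2 * π * cexp (α * I) * x * ξ) := by
  have hπ : (π : ℂ) ≠ 0 := ofReal_ne_zero.mpr pi_ne_zero
  have hb (r : ℝ) : (-π * (1 + I * r)).re < 0 := by simpa using pi_pos
  refine ⟨cexp (I * (α - π / 2) / 2) / (Real.sqrt |Real.sin α| : ℂ) *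
    (π / (π * (1 + I * ((Real.cos α / Real.sin α : ℝ) : ℂ)))) ^ (1 / 2 : ℂ), ?_,
    fun a T hT ξ => ?_⟩
  · refine mul_ne_zero (div_ne_zero (exp_ne_zero _) ?_) ?_
    · exact ofReal_ne_zero.mpr (Real.sqrt_ne_zero'.mpr (abs_pos.mpr hS))
    · refine (cpow_ne_zero_iff_of_exponent_ne_zero (one_div_ne_zero two_ne_zero)).mpr ?_
      refine div_ne_zero hπ (mul_ne_zero hπ fun h => ?_)
      simpa using (hb (Real.cos α / Real.sin α)).ne (by rw [h, mul_zero, zero_re])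
  rw [frft, if_neg hS]
  simp_rw [gaussianComb_apply_of_support_subset hT, Finset.sum_mul, mul_assoc (a _)]
  have hint (x : ℝ) : Integrable fun t : ℝ => cexp (-π * ((t : ℂ) - x) ^ 2) *
      cexp (-π * I * (t : ℂ) ^ 2 * ((Real.cos α / Real.sin α : ℝ) : ℂ)) *
      cexp (-2 * π * I * t * ξ / ((Real.sin α : ℝ) : ℂ)) := by
    simpa only [gaussian_mul_frft_kernel_eq_cexp_quadratic] using
      integrable_cexp_quadratic' (hb _) _ _
  rw [integral_finsetSum _ fun x _ => (hint x).const_mul _]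
  simp_rw [integral_const_mul, Finset.mul_sum]
  refine Finset.sum_congr rfl fun x _ => ?_
  linear_combination (cexp (I * (α - π / 2) / 2) / (Real.sqrt |Real.sin α| : ℂ) * a x) *
    integral_gaussian_mul_frft_kernel hS x ξ

theorem exists_norm_eq_one_eq_smul_of_norm_frft_gaussianComb_eq {α : ℝ} (hS : Real.sin α ≠ 0)
    (hC : Real.cos α ≠ 0) {a b : ℝ →₀ ℂ}
    (h : ∀ ξ : ℝ, ‖frft α (gaussianComb b) ξ‖ = ‖frft α (gaussianComb a) ξ‖) :
    ∃ c : ℂ, ‖c‖ = 1 ∧ b = c • a := by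
  classical
  obtain ⟨K, hK, hF⟩ := frft_gaussianComb hS
  set T := a.support ∪ b.support
  set w : ℝ → ℂ := fun x => cexp (-π * Real.cos α * cexp (α * I) * (x : ℂ) ^ 2)
  have hsum (ξ : ℝ) : ‖∑ x ∈ T, b x * w x * cexp (-2 * π * cexp (α * I) * x * ξ)‖ =
      ‖∑ x ∈ T, a x * w x * cexp (-2 * π * cexp (α * I) * x * ξ)‖ := by
    have hξ := h ξ
    simp only [hF b T Finset.subset_union_right ξ, hF a T Finset.subset_union_left ξ,
      norm_mul] at hξ
    exact mul_left_cancel₀ (by simp [hK]) hξ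
  have hT := mul_conj_eq_of_norm_sum_cexp_eq (μ := fun x : ℝ => -2 * π * cexp (α * I) * x)
    (a := fun x => b x * w x) (b := fun x => a x * w x)
    (injective_add_conj_of_sin_ne_zero_of_cos_ne_zero hS hC) hsum
  have hprod (x y : ℝ) : b x * conj (b y) = a x * conj (a y) := by
    by_cases hxy : x ∈ T ∧ y ∈ T
    · have hw : w x * conj (w y) ≠ 0 :=
        mul_ne_zero (Complex.exp_ne_zero _) ((map_ne_zero _).mpr (Complex.exp_ne_zero _))
      have hxy' := hT x hxy.1 y hxy.2
      rw [map_mul, map_mul] at hxy'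
      exact mul_right_cancel₀ hw (by linear_combination hxy')
    · have hzero (z : ℝ) (hz : z ∉ T) : a z = 0 ∧ b z = 0 := by simpa [T] using hz
      rcases not_and_or.mp hxy with hx | hy
      · simp [hzero x hx]
      · simp [hzero y hy]
  obtain ⟨c, hc, hbc⟩ := exists_norm_eq_one_of_mul_conj_eq_s17 hprod
  exact ⟨c, hc, Finsupp.ext hbc⟩

theorem gaussianComb_mapDomain_equivFunOnFinite_symm {ι : Type*} [Fintype ι] (s : ι → ℝ)
    (c : ι → ℂ) :
    gaussianComb (Finsupp.mapDomain s (Finsupp.equivFunOnFinite.symm c)) =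
      fun t : ℝ => ∑ j, c j * cexp (-π * ((t : ℂ) - s j) ^ 2) := by
  ext t
  rw [gaussianComb, Finsupp.linearCombination_mapDomain, Finsupp.linearCombination_apply,
    Finsupp.sum_fintype _ _ (by simp)]
  simp

theorem Finsupp.mapDomain_equivFunOnFinite_symm_apply_ne_zero_iff {ι β M : Type*} [Finite ι]
    [AddCommMonoid M] {s : ι → β} (hs : Function.Injective s) {c : ι → M} (hc : ∀ i, c i ≠ 0)
    (x : β) : mapDomain s (equivFunOnFinite.symm c) x ≠ 0 ↔ x ∈ Set.range s := by
  constructor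
  · exact fun hx => by_contra fun hxs => hx (mapDomain_of_notMem_range _ _ hxs)
  · rintro ⟨i, rfl⟩
    simpa [mapDomain_apply hs] using hc i

theorem exists_equiv_comp_eq_of_range_eq {α β γ : Type*} {f : α → γ} {g : β → γ}
    (hf : Function.Injective f) (hg : Function.Injective g) (h : Set.range f = Set.range g) :
    ∃ e : α ≃ β, ∀ a, g (e a) = f a :=
  ⟨(Equiv.ofInjective f hf).trans ((Equiv.setCongr h).trans (Equiv.ofInjective g hg).symm),
    fun a => by simp [Equiv.apply_ofInjective_symm]⟩

/-- Theorem 5.10: a finite linear combination of shifted Gaussians is determined among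
such combinations, up to a unimodular constant, by the modulus of a single fractional
Fourier transform of order α ∉ (π/2)ℤ. -/
theorem phase_retrieval_shifted_gaussians
    (α : ℝ) (hα : ∀ k : ℤ, α ≠ (k : ℝ) * (Real.pi / 2))
    (N M : ℕ) (c : Fin N → ℂ) (κ : Fin M → ℂ) (s : Fin N → ℝ) (τ : Fin M → ℝ)
    (hs : Function.Injective s) (hτ : Function.Injective τ)
    (hc : ∀ j, c j ≠ 0) (hκ : ∀ j, κ j ≠ 0)
    (u v : ℝ → ℂ)
    (hu : u = fun t : ℝ => ∑ j, c j * Complex.exp (-(Real.pi : ℂ) * ((t : ℂ) - (s j : ℂ)) ^ 2))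
    (hv : v = fun t : ℝ => ∑ j, κ j * Complex.exp (-(Real.pi : ℂ) * ((t : ℂ) - (τ j : ℂ)) ^ 2))
    (h : ∀ ξ : ℝ, ‖frft α v ξ‖ = ‖frft α u ξ‖) :
    ∃ (c₀ : ℂ) (e : Fin M ≃ Fin N), ‖c₀‖ = 1 ∧ (∀ j, τ j = s (e j)) ∧
      (∀ j, κ j = c₀ * c (e j)) ∧ ∀ t : ℝ, v t = c₀ * u t := by
  have hsin2 : Real.sin α * Real.cos α ≠ 0 := by
    have : Real.sin (2 * α) ≠ 0 := sin_ne_zero_iff.mpr fun k hk => hα k (by linarith)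
    rw [Real.sin_two_mul, mul_assoc] at this
    exact right_ne_zero_of_mul this
  set a := Finsupp.mapDomain s (Finsupp.equivFunOnFinite.symm c)
  set b := Finsupp.mapDomain τ (Finsupp.equivFunOnFinite.symm κ)
  have hua : u = gaussianComb a := hu.trans (gaussianComb_mapDomain_equivFunOnFinite_symm s c).symm
  have hvb : v = gaussianComb b := hv.trans (gaussianComb_mapDomain_equivFunOnFinite_symm τ κ).symm
  obtain ⟨c₀, hc₀, hba⟩ := exists_norm_eq_one_eq_smul_of_norm_frft_gaussianComb_eq
    (left_ne_zero_of_mul hsin2) (right_ne_zero_of_mul hsin2) (a := a) (b := b)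
    (by rwa [← hua, ← hvb])
  have hrange : Set.range τ = Set.range s := by
    ext x
    rw [← Finsupp.mapDomain_equivFunOnFinite_symm_apply_ne_zero_iff hτ hκ,
      ← Finsupp.mapDomain_equivFunOnFinite_symm_apply_ne_zero_iff hs hc]
    change b x ≠ 0 ↔ a x ≠ 0
    rw [hba, Finsupp.smul_apply, smul_ne_zero_iff_right (norm_ne_zero_iff.mp (hc₀ ▸ one_ne_zero))]
  obtain ⟨e, he⟩ := exists_equiv_comp_eq_of_range_eq hτ hs hrange
  refine ⟨c₀, e, hc₀, fun j => (he j).symm, fun j => ?_, fun t => ?_⟩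
  · calc κ j = b (τ j) := by simp [b, Finsupp.mapDomain_apply hτ]
      _ = c₀ * a (s (e j)) := by rw [hba, he j]; rfl
      _ = c₀ * c (e j) := by simp [a, Finsupp.mapDomain_apply hs]
  · rw [hvb, hua, hba, map_smul]
    rfl
end
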